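/- arXiv:math/0405311 — 7 statements merged into one kernel-verified Lean document; each statement's English description precedes it below -/
import Mathlib

section
/- Let 𝒞 be a family of subrings of C*(X) for a topological space X, let R be the subring generated by the union of 𝒞, and let C be the uniform closure of R. If f ∈ C satisfies f''A = {1} and f''B = {0} for sets A, B ⊆ X, then there is a finite subfamily ℱ ⊆ 𝒞 and a function g in the subring generated by ∪ℱ such that g(x) ≥ 2/3 for x ∈ A and g(x) ≤ 1/3 for x ∈ B. -/
namespace Subring

variable {R : Type*} [Ring R]

theorem closure_biUnion_mono {ℱ 𝒢 : Set (Subring R)} (h : ℱ ⊆ 𝒢) :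
    closure (⋃ S ∈ ℱ, (S : Set R)) ≤ closure (⋃ S ∈ 𝒢, (S : Set R)) :=
  closure_mono (Set.biUnion_subset_biUnion_left h)

theorem exists_finite_of_mem_closure_biUnion {𝒞 : Set (Subring R)} {g : R}
    (hg : g ∈ closure (⋃ S ∈ 𝒞, (S : Set R))) :
    ∃ ℱ ⊆ 𝒞, ℱ.Finite ∧ g ∈ closure (⋃ S ∈ ℱ, (S : Set R)) := by
  induction hg using closure_induction with
  | mem x hx =>
    obtain ⟨S, hS, hxS⟩ := Set.mem_iUnion₂.mp hx
    exact ⟨{S}, Set.singleton_subset_iff.mpr hS, Set.finite_singleton S,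
      subset_closure (Set.mem_biUnion (Set.mem_singleton S) hxS)⟩
  | zero => exact ⟨∅, Set.empty_subset _, Set.finite_empty, zero_mem _⟩
  | one => exact ⟨∅, Set.empty_subset _, Set.finite_empty, one_mem _⟩
  | neg x _ hx =>
    obtain ⟨ℱ, hℱ, hfin, hxℱ⟩ := hx
    exact ⟨ℱ, hℱ, hfin, neg_mem hxℱ⟩
  | add x y _ _ hx hy =>
    obtain ⟨ℱ, hℱ, hℱfin, hxℱ⟩ := hx
    obtain ⟨𝒢, h𝒢, h𝒢fin, hy𝒢⟩ := hy
    exact ⟨ℱ ∪ 𝒢, Set.union_subset hℱ h𝒢, hℱfin.union h𝒢fin,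
      add_mem (closure_biUnion_mono Set.subset_union_left hxℱ)
        (closure_biUnion_mono Set.subset_union_right hy𝒢)⟩
  | mul x y _ _ hx hy =>
    obtain ⟨ℱ, hℱ, hℱfin, hxℱ⟩ := hx
    obtain ⟨𝒢, h𝒢, h𝒢fin, hy𝒢⟩ := hy
    exact ⟨ℱ ∪ 𝒢, Set.union_subset hℱ h𝒢, hℱfin.union h𝒢fin,
      mul_mem (closure_biUnion_mono Set.subset_union_left hxℱ)
        (closure_biUnion_mono Set.subset_union_right hy𝒢)⟩

end Subring

theorem BoundedContinuousFunction.abs_sub_apply_lt_of_dist_lt {X : Type*}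
    [TopologicalSpace X] {f g : BoundedContinuousFunction X ℝ} {ε : ℝ}
    (h : dist f g < ε) (x : X) : |f x - g x| < ε :=
  (dist_coe_le_dist x).trans_lt h

/-- If `𝒞` is a family of subrings of `C*(X)`, `R` the subring
generated by `⋃ 𝒞` and `C` its uniform closure, and `f ∈ C` satisfies
`f '' A = {1}` and `f '' B = {0}`, then there is a finite `ℱ ⊆ 𝒞` and a `g`
in the subring generated by `⋃ ℱ` with `g ≥ 2/3` on `A` and `g ≤ 1/3` on `B`. -/
theorem stmt2 {X : Type*} [TopologicalSpace X]
    (𝒞 : Set (Subring (BoundedContinuousFunction X ℝ))) (A B : Set X)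
    (f : BoundedContinuousFunction X ℝ)
    (hf : f ∈ closure ((Subring.closure
        (⋃ S ∈ 𝒞, (S : Set (BoundedContinuousFunction X ℝ)))) :
        Set (BoundedContinuousFunction X ℝ)))
    (hA : (⇑f) '' A = {1}) (hB : (⇑f) '' B = {0}) :
    ∃ ℱ ⊆ 𝒞, ℱ.Finite ∧
      ∃ g ∈ Subring.closure (⋃ S ∈ ℱ, (S : Set (BoundedContinuousFunction X ℝ))),
        (∀ x ∈ A, 2/3 ≤ g x) ∧ (∀ x ∈ B, g x ≤ 1/3) := by
  obtain ⟨g, hg, hfg⟩ := Metric.mem_closure_iff.mp hf (1/3) (by norm_num)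
  obtain ⟨ℱ, hℱ, hfin, hgℱ⟩ := Subring.exists_finite_of_mem_closure_biUnion hg
  have hclose := BoundedContinuousFunction.abs_sub_apply_lt_of_dist_lt hfg
  refine ⟨ℱ, hℱ, hfin, g, hgℱ, fun x hx => ?_, fun x hx => ?_⟩
  · have hfx : f x = 1 := Set.mem_singleton_iff.mp (hA ▸ Set.mem_image_of_mem f hx)
    linarith [(abs_sub_lt_iff.mp (hclose x)).1]
  · have hfx : f x = 0 := Set.mem_singleton_iff.mp (hB ▸ Set.mem_image_of_mem f hx)
    linarith [(abs_sub_lt_iff.mp (hclose x)).2]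
end

section
/- There exists a family 𝒟 of metrics on [0,∞), each compatible with the usual topology, with |𝒟| equal to the dominating number 𝔡, such that for every pair of disjoint closed subsets A, B of [0,∞) there is a metric ρ ∈ 𝒟 with ρ(A,B) > 0. -/
/-!
For `f : ℕ → ℕ` let `H_f` be the piecewise linear map of `[0, ∞)` with slope `f k + 1` on
`[k, k + 1]`, and `ρ_f x y = |H_f x - H_f y|`. As `H_f` is continuous and expands distances,
`ρ_f` is a compatible metric, and `ρ_f` determines `f`. For disjoint closed `A`, `B`, compactness
gives `δ_M > 0` with `|a - b| ≥ δ_M` for `a ∈ A ∩ [0, M]`, `b ∈ B`. If `f` eventually dominates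
`k ↦ ⌈1 / δ_(k+2)⌉`, then far enough out `H_f` stretches every short gap between `A` and `B` to
length at least `1`, while near the origin the gaps are bounded below anyway. So the metrics
`ρ_f` for `f` in a dominating family of size `𝔡` do the job.
-/

/-- `d` is a metric on `α`. -/
def IsMetricOn {α : Type*} (d : α → α → ℝ) : Prop :=
  (∀ x y, d x y = 0 ↔ x = y) ∧ (∀ x y, d x y = d y x) ∧
    ∀ x y z, d x z ≤ d x y + d y z

/-- `d` induces the topology of `α`. -/
def InducesTopology {α : Type*} [TopologicalSpace α] (d : α → α → ℝ) : Prop :=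
  ∀ x : α, ∀ s : Set α, s ∈ nhds x ↔ ∃ ε > (0 : ℝ), ∀ y, d x y < ε → y ∈ s

/-- The dominating number `𝔡`. -/
noncomputable def dominatingNumber : Cardinal :=
  sInf {c : Cardinal | ∃ F : Set (ℕ → ℕ), Cardinal.mk F = c ∧
    ∀ g : ℕ → ℕ, ∃ f ∈ F, ∀ᶠ n in Filter.atTop, g n ≤ f n}

open Filter Finset Topology

noncomputable section

def ramp (t : ℝ) : ℝ := max 0 (min 1 t)

lemma ramp_of_nonpos {t : ℝ} (ht : t ≤ 0) : ramp t = 0 := by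
  simp [ramp, (min_le_right 1 t).trans ht]

lemma ramp_of_one_le {t : ℝ} (ht : 1 ≤ t) : ramp t = 1 := by
  simp [ramp, ht]

lemma monotone_ramp : Monotone ramp := fun _ _ h =>
  max_le_max le_rfl (min_le_min le_rfl h)

lemma continuous_ramp : Continuous ramp := by
  unfold ramp; fun_prop

lemma sum_range_ramp (t : ℝ) (N : ℕ) :
    ∑ k ∈ range N, ramp (t - k) = max 0 (min t N) := by
  induction N with
  | zero => simp
  | succ N ih =>
    rw [sum_range_succ, ih]
    simp only [ramp, Nat.cast_succ, max_def, min_def]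
    split_ifs <;> linarith

/-- The piecewise linear map fixing `0` with slope `w k` on `[k, k + 1]`. -/
def stretch (w : ℕ → ℝ) (x : ℝ) : ℝ :=
  ∑ k ∈ range ⌈x⌉₊, w k * ramp (x - k)

section Stretch

variable (w : ℕ → ℝ)

lemma stretch_eq_sum_range {x : ℝ} {N : ℕ} (hx : x ≤ N) :
    stretch w x = ∑ k ∈ range N, w k * ramp (x - k) := by
  have extend : ∀ {M N : ℕ}, x ≤ M → M ≤ N →
      ∑ k ∈ range M, w k * ramp (x - k) = ∑ k ∈ range N, w k * ramp (x - k) := by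
    intro M N hM hMN
    refine sum_subset (range_subset_range.2 hMN) fun k _ hk => ?_
    have : x ≤ k := hM.trans (by exact_mod_cast not_lt.1 (mem_range.not.1 hk))
    rw [ramp_of_nonpos (by linarith), mul_zero]
  rcases le_total ⌈x⌉₊ N with h | h
  · exact extend (Nat.le_ceil x) h
  · exact (extend hx h).symm

lemma stretch_natCast (n : ℕ) : stretch w n = ∑ k ∈ range n, w k := by
  rw [stretch_eq_sum_range w le_rfl]
  refine sum_congr rfl fun k hk => ?_
  have : (k : ℝ) + 1 ≤ n := by exact_mod_cast mem_range.1 hk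
  rw [ramp_of_one_le (by linarith), mul_one]

lemma continuous_stretch : Continuous (stretch w) := by
  refine continuous_iff_continuousAt.2 fun x => ?_
  have hx : x < (⌈x⌉₊ + 1 : ℕ) := by push_cast; linarith [Nat.le_ceil x]
  refine (continuous_finsetSum _ fun k _ => ?_).continuousAt.congr
    (eventually_of_mem (Iio_mem_nhds hx) fun z hz => (stretch_eq_sum_range w (le_of_lt hz)).symm)
  exact continuous_const.mul (continuous_ramp.comp (continuous_id.sub continuous_const))

lemma mul_sub_le_stretch_sub {c x y : ℝ} (hx : 0 ≤ x) (hxy : x ≤ y)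
    (hw : ∀ k : ℕ, x < k + 1 → (k : ℝ) < y → c ≤ w k) :
    c * (y - x) ≤ stretch w y - stretch w x := by
  have hy : y ≤ ⌈y⌉₊ := Nat.le_ceil y
  rw [stretch_eq_sum_range w hy, stretch_eq_sum_range w (hxy.trans hy), ← sum_sub_distrib]
  calc c * (y - x) = ∑ k ∈ range ⌈y⌉₊, c * (ramp (y - k) - ramp (x - k)) := by
        rw [← mul_sum, sum_sub_distrib, sum_range_ramp, sum_range_ramp,
          min_eq_left hy, min_eq_left (hxy.trans hy), max_eq_right (hx.trans hxy), max_eq_right hx]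
    _ ≤ ∑ k ∈ range ⌈y⌉₊, (w k * ramp (y - k) - w k * ramp (x - k)) := by
        refine sum_le_sum fun k _ => ?_
        rw [← mul_sub]
        by_cases hk : x < k + 1 ∧ (k : ℝ) < y
        · exact mul_le_mul_of_nonneg_right (hw k hk.1 hk.2)
            (sub_nonneg.2 (monotone_ramp (by linarith)))
        · have : ramp (y - k) = ramp (x - k) := by
            rcases not_and_or.1 hk with h | h
            · rw [ramp_of_one_le (by linarith), ramp_of_one_le (by linarith)]
            · rw [ramp_of_nonpos (by linarith), ramp_of_nonpos (by linarith)]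
          simp [this]

lemma one_le_stretch_sub {x y : ℝ} (hx : 0 ≤ x) (hxy : x < y)
    (hw : ∀ k : ℕ, x < k + 1 → (k : ℝ) < y → (y - x)⁻¹ ≤ w k) :
    1 ≤ stretch w y - stretch w x :=
  calc 1 = (y - x)⁻¹ * (y - x) := (inv_mul_cancel₀ (sub_pos.2 hxy).ne').symm
    _ ≤ stretch w y - stretch w x := mul_sub_le_stretch_sub w hx hxy.le hw

lemma antilipschitzWith_domRestrict_stretch (hw : ∀ k, 1 ≤ w k) :
    AntilipschitzWith 1 ((Set.Ici 0).domRestrict (stretch w)) := by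
  refine AntilipschitzWith.of_le_mul_dist fun x y => ?_
  wlog h : x ≤ y generalizing x y
  · rw [dist_comm, dist_comm (Set.domRestrict _ _ x)]
    exact this y x (le_of_not_ge h)
  have hxy : (x : ℝ) ≤ y := h
  rw [NNReal.coe_one, one_mul, Subtype.dist_eq, Real.dist_eq, Real.dist_eq, abs_sub_comm (x : ℝ),
    abs_of_nonneg (sub_nonneg.2 hxy), abs_sub_comm]
  simpa using (mul_sub_le_stretch_sub w x.2 hxy fun k _ _ => hw k).trans (le_abs_self _)

end Stretch

lemma Function.Injective.isMetricOn_dist {α β : Type*} [MetricSpace β] {h : α → β}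
    (hh : Function.Injective h) : IsMetricOn fun x y => dist (h x) (h y) :=
  ⟨fun _ _ => dist_eq_zero.trans hh.eq_iff, fun _ _ => dist_comm _ _,
    fun _ _ _ => dist_triangle _ _ _⟩

lemma Topology.IsInducing.inducesTopology_dist {α β : Type*} [TopologicalSpace α]
    [PseudoMetricSpace β] {h : α → β} (hh : IsInducing h) :
    InducesTopology fun x y => dist (h x) (h y) := by
  intro x s
  rw [hh.nhds_eq_comap, (Metric.nhds_basis_ball.comap h).mem_iff]
  simp only [Set.subset_def, Set.mem_preimage, Metric.mem_ball, dist_comm]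

def stretchEmbedding (f : ℕ → ℕ) : Set.Ici (0 : ℝ) → ℝ :=
  (Set.Ici 0).domRestrict (stretch fun k => f k + 1)

def stretchDist (f : ℕ → ℕ) (x y : Set.Ici (0 : ℝ)) : ℝ :=
  dist (stretchEmbedding f x) (stretchEmbedding f y)

lemma antilipschitzWith_stretchEmbedding (f : ℕ → ℕ) :
    AntilipschitzWith 1 (stretchEmbedding f) :=
  antilipschitzWith_domRestrict_stretch _ fun _ => le_add_of_nonneg_left (Nat.cast_nonneg _)

lemma isMetricOn_stretchDist (f : ℕ → ℕ) : IsMetricOn (stretchDist f) :=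
  (antilipschitzWith_stretchEmbedding f).injective.isMetricOn_dist

lemma inducesTopology_stretchDist (f : ℕ → ℕ) : InducesTopology (stretchDist f) :=
  ((antilipschitzWith_stretchEmbedding f).isInducing
    ((continuous_stretch _).comp continuous_subtype_val)).inducesTopology_dist

lemma stretchDist_natCast_zero (f : ℕ → ℕ) (n : ℕ) :
    stretchDist f ⟨n, Set.mem_Ici.2 n.cast_nonneg⟩ ⟨0, Set.self_mem_Ici⟩ =
      ∑ k ∈ range n, ((f k : ℝ) + 1) := by
  have h0 : stretch (fun k => (f k : ℝ) + 1) 0 = 0 := by simp [stretch]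
  rw [stretchDist, stretchEmbedding, Set.domRestrict_apply, Set.domRestrict_apply, Real.dist_eq,
    stretch_natCast, h0, sub_zero, abs_of_nonneg (by positivity)]

lemma stretchDist_injective : Function.Injective stretchDist := by
  intro f g hfg
  have hsum : ∀ m, ∑ k ∈ range m, ((f k : ℝ) + 1) = ∑ k ∈ range m, ((g k : ℝ) + 1) := fun m => by
    rw [← stretchDist_natCast_zero, hfg, stretchDist_natCast_zero]
  funext n
  have h := hsum (n + 1)
  rw [sum_range_succ, sum_range_succ, hsum n] at h
  exact_mod_cast add_right_cancel (add_left_cancel h)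

/-- Points closer than `min 1 (δ (N + 2))` only cross segments `[k, k + 1]` with `N ≤ k`, where
the slope exceeds `(y - x)⁻¹`. -/
lemma min_one_le_stretch_sub {δ : ℝ → ℝ} (hδ0 : ∀ M, 0 < δ M) {f : ℕ → ℕ} {N : ℕ}
    (hN : ∀ k ≥ N, ⌈(δ (k + 2))⁻¹⌉₊ ≤ f k) {x y : ℝ} (hx : 0 ≤ x) (hxy : x ≤ y)
    (hxyδ : ∀ M, y ≤ M → δ M ≤ y - x) :
    min 1 (δ (N + 2)) ≤ stretch (fun k => f k + 1) y - stretch (fun k => f k + 1) x := by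
  by_cases hfar : min 1 (δ (N + 2)) ≤ y - x
  · refine hfar.trans ?_
    simpa using mul_sub_le_stretch_sub _ (c := 1) hx hxy
      fun k _ _ => le_add_of_nonneg_left (Nat.cast_nonneg _)
  rw [not_le] at hfar
  have hslope : ∀ k : ℕ, x < k + 1 → (k : ℝ) < y → (y - x)⁻¹ ≤ f k + 1 := by
    intro k hxk hky
    have hyk : y < k + 2 := by linarith [min_le_left 1 (δ (N + 2))]
    have hNk : N ≤ k := by
      by_contra! hkN
      have : (k : ℝ) + 1 ≤ N := by exact_mod_cast hkN
      linarith [min_le_right 1 (δ (N + 2)), hxyδ (N + 2) (by linarith)]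
    calc (y - x)⁻¹ ≤ (δ (k + 2))⁻¹ := inv_anti₀ (hδ0 _) (hxyδ _ hyk.le)
      _ ≤ ⌈(δ (k + 2))⁻¹⌉₊ := Nat.le_ceil _
      _ ≤ f k := by exact_mod_cast hN k hNk
      _ ≤ f k + 1 := le_add_of_nonneg_right zero_le_one
  exact (min_le_left _ _).trans
    (one_le_stretch_sub _ hx (sub_pos.1 ((hδ0 _).trans_le (hxyδ y le_rfl))) hslope)

theorem exists_forall_le_dist_stretch {A B : Set ℝ} (hA : IsClosed A) (hB : IsClosed B)
    (hAB : Disjoint A B) :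
    ∃ g : ℕ → ℕ, ∀ f : ℕ → ℕ, (∀ᶠ n in atTop, g n ≤ f n) →
      ∃ ε > (0 : ℝ), ∀ a ∈ A, ∀ b ∈ B, 0 ≤ a → 0 ≤ b →
        ε ≤ dist (stretch (fun k => f k + 1) a) (stretch (fun k => f k + 1) b) := by
  have hsep : ∀ M : ℝ, ∃ δ > (0 : ℝ), ∀ a ∈ A, ∀ b ∈ B, 0 ≤ a → a ≤ M → δ ≤ dist a b := by
    intro M
    obtain ⟨r, hr, hrAB⟩ := Metric.exists_pos_forall_lt_edist (isCompact_Icc.inter_left hA) hB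
      (hAB.mono_left Set.inter_subset_left)
    refine ⟨r, hr, fun a ha b hb ha0 haM => ?_⟩
    have := hrAB a ⟨ha, ha0, haM⟩ b hb
    rw [edist_nndist, ENNReal.coe_lt_coe] at this
    exact_mod_cast this.le
  choose δ hδ0 hδ using hsep
  refine ⟨fun k => ⌈(δ (k + 2))⁻¹⌉₊, fun f hf => ?_⟩
  obtain ⟨N, hN⟩ := eventually_atTop.1 hf
  refine ⟨min 1 (δ (N + 2)), lt_min one_pos (hδ0 _), fun a ha b hb ha0 hb0 => ?_⟩
  rw [Real.dist_eq]
  rcases le_total a b with hab | hab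
  · rw [abs_sub_comm]
    refine (min_one_le_stretch_sub hδ0 hN ha0 hab fun M hbM => ?_).trans (le_abs_self _)
    have := hδ M a ha b hb ha0 (hab.trans hbM)
    rwa [Real.dist_eq, abs_sub_comm, abs_of_nonneg (sub_nonneg.2 hab)] at this
  · refine (min_one_le_stretch_sub hδ0 hN hb0 hab fun M haM => ?_).trans (le_abs_self _)
    have := hδ M a ha b hb ha0 haM
    rwa [Real.dist_eq, abs_of_nonneg (sub_nonneg.2 hab)] at this

lemma exists_dominating_family_card_eq :
    ∃ F : Set (ℕ → ℕ), Cardinal.mk F = dominatingNumber ∧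
      ∀ g : ℕ → ℕ, ∃ f ∈ F, ∀ᶠ n in atTop, g n ≤ f n :=
  csInf_mem (s := {c | ∃ F : Set (ℕ → ℕ), Cardinal.mk F = c ∧
    ∀ g : ℕ → ℕ, ∃ f ∈ F, ∀ᶠ n in atTop, g n ≤ f n})
    ⟨_, Set.univ, rfl, fun g => ⟨g, Set.mem_univ g, .of_forall fun _ => le_rfl⟩⟩

end

/-- There is a family `𝒟` of compatible metrics on `[0,∞)` of
cardinality `𝔡` such that every pair of disjoint closed sets is at positive
distance with respect to some metric in `𝒟`. -/
theorem stmt3 :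
    ∃ 𝒟 : Set (Set.Ici (0:ℝ) → Set.Ici (0:ℝ) → ℝ),
      Cardinal.mk 𝒟 = dominatingNumber ∧
      (∀ d ∈ 𝒟, IsMetricOn d ∧ InducesTopology d) ∧
      ∀ A B : Set (Set.Ici (0:ℝ)), IsClosed A → IsClosed B → Disjoint A B →
        ∃ ρ ∈ 𝒟, ∃ ε > (0:ℝ), ∀ a ∈ A, ∀ b ∈ B, ε ≤ ρ a b := by
  obtain ⟨F, hFcard, hFdom⟩ := exists_dominating_family_card_eq
  refine ⟨stretchDist '' F, ?_, ?_, ?_⟩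
  · rw [Cardinal.mk_image_eq stretchDist_injective, hFcard]
  · rintro d ⟨f, -, rfl⟩
    exact ⟨isMetricOn_stretchDist f, inducesTopology_stretchDist f⟩
  · intro A B hA hB hAB
    have hval := (isClosed_Ici (a := (0 : ℝ))).isClosedEmbedding_subtypeVal.isClosedMap
    obtain ⟨g, hg⟩ := exists_forall_le_dist_stretch (hval _ hA) (hval _ hB)
      (Set.disjoint_image_of_injective Subtype.val_injective hAB)
    obtain ⟨f, hfF, hfg⟩ := hFdom g
    obtain ⟨ε, hε, hfAB⟩ := hg f hfg
    exact ⟨stretchDist f, Set.mem_image_of_mem _ hfF, ε, hε, fun a ha b hb =>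
      hfAB a (Set.mem_image_of_mem _ ha) b (Set.mem_image_of_mem _ hb) a.2 b.2⟩
end

section
/- Let κ < 𝔡 and let D be a family of metrics on [0,∞), each compatible with the usual topology, with |D| = κ. Then there exist disjoint closed sets A, B ⊆ [0,∞) such that for every finite nonempty F ⊆ D and every function φ in the uniform closure of the subring of C*([0,∞)) generated by ∪{U*_d : d ∈ F}, there are no reals a > b with φ(x) ≥ a on A and φ(x) ≤ b on B. -/
/-- The bounded functions on `[0,∞)` uniformly continuous with respect to `d`. -/
def UStar (d : Set.Ici (0:ℝ) → Set.Ici (0:ℝ) → ℝ) :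
    Set (BoundedContinuousFunction (Set.Ici (0:ℝ)) ℝ) :=
  {g | ∀ ε > (0:ℝ), ∃ δ > (0:ℝ), ∀ x y, d x y ≤ δ → |g x - g y| ≤ ε}

open Filter Set Topology Cardinal BoundedContinuousFunction

theorem aleph0_le_dominatingNumber : ℵ₀ ≤ dominatingNumber := by
  refine le_csInf ⟨_, univ, rfl, fun g => ⟨g, trivial, .of_forall fun _ => le_rfl⟩⟩ ?_
  rintro _ ⟨F, rfl, hF⟩
  by_contra! hfin
  have hF_fin : F.Finite := lt_aleph0_iff_set_finite.1 hfin
  obtain ⟨f, hfF, hev⟩ := hF fun n => hF_fin.toFinset.sup (· n) + 1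
  obtain ⟨n, hn⟩ := hev.exists
  exact (Finset.le_sup (f := (· n)) (hF_fin.mem_toFinset.2 hfF)).not_gt hn

theorem exists_frequently_lt_of_mk_lt_dominatingNumber {ι : Type} (hι : #ι < dominatingNumber)
    (f : ι → ℕ → ℕ) : ∃ g : ℕ → ℕ, ∀ i, ∃ᶠ n in atTop, f i n < g n := by
  by_contra! h
  have hdom : dominatingNumber ≤ #(range f) := csInf_le' ⟨range f, rfl, fun g => by
    obtain ⟨i, hi⟩ := h g
    exact ⟨f i, mem_range_self i, hi⟩⟩
  exact (hdom.trans mk_range_le).not_gt hι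

theorem mk_finset_lt_dominatingNumber {ι : Type} (hι : #ι < dominatingNumber) :
    #(Finset ι) < dominatingNumber := by
  rcases finite_or_infinite ι with h | h
  · exact (lt_aleph0_of_finite _).trans_le aleph0_le_dominatingNumber
  · rwa [mk_finset_of_infinite]

theorem exists_frequently_forall_mem_lt_of_mk_lt_dominatingNumber {ι : Type}
    (hι : #ι < dominatingNumber) (f : ι → ℕ → ℕ) :
    ∃ g : ℕ → ℕ, ∀ s : Finset ι, ∃ᶠ n in atTop, ∀ i ∈ s, f i n < g n := by
  obtain ⟨g, hg⟩ := exists_frequently_lt_of_mk_lt_dominatingNumber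
    (mk_finset_lt_dominatingNumber hι) fun s n => s.sup (f · n)
  exact ⟨g, fun s => (hg s).mono fun n hn i hi => (Finset.le_sup (f := (f · n)) hi).trans_lt hn⟩

section UniformityOfDistances

variable {α : Type*}

/-- For finite `S` this is `⨅ d ∈ S, distUniformity {d}`; it plays the role of the uniformity
generated by the distances in `S`. -/
def distUniformity (S : Set (α → α → ℝ)) : Filter (α × α) :=
  ⨅ δ > (0 : ℝ), 𝓟 {p | ∀ d ∈ S, d p.1 p.2 ≤ δ}

theorem hasBasis_distUniformity (S : Set (α → α → ℝ)) :
    (distUniformity S).HasBasis (0 < ·) fun δ => {p | ∀ d ∈ S, d p.1 p.2 ≤ δ} :=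
  hasBasis_biInf_principal'
    (fun δ hδ ε hε => ⟨min δ ε, lt_min hδ hε,
      fun _ hp d hd => (hp d hd).trans (min_le_left _ _),
      fun _ hp d hd => (hp d hd).trans (min_le_right _ _)⟩)
    ⟨1, one_pos⟩

theorem distUniformity_anti {S T : Set (α → α → ℝ)} (h : S ⊆ T) :
    distUniformity T ≤ distUniformity S :=
  iInf₂_mono fun _ _ => principal_mono.2 fun _ hp d hd => hp d (h hd)

variable [TopologicalSpace α]

def uniformlyContinuousSubring (L : Filter (α × α)) : Subring (α →ᵇ ℝ) where
  carrier := {g | Tendsto (fun p => g p.1 - g p.2) L (𝓝 0)}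
  zero_mem' := by simpa using tendsto_const_nhds
  one_mem' := by simpa using tendsto_const_nhds
  neg_mem' {g} hg := by
    simpa only [mem_ofPred_eq, coe_neg, Pi.neg_apply, neg_sub_neg, neg_sub, neg_zero] using hg.neg
  add_mem' {g h} hg hh := by
    simpa only [mem_ofPred_eq, coe_add, Pi.add_apply, add_sub_add_comm, add_zero] using hg.add hh
  mul_mem' {g h} hg hh := by
    have hbdd : ∀ k : α →ᵇ ℝ, ∀ i : α × α → α, IsBoundedUnder (· ≤ ·) L fun p => ‖k (i p)‖ :=
      fun k i => isBoundedUnder_of ⟨‖k‖, fun p => k.norm_coe_le_norm (i p)⟩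
    -- `g x h x - g y h y = h x (g x - g y) + g y (h x - h y)`
    have := (hg.zero_mul_isBoundedUnder_le (hbdd h Prod.fst)).add
      (hh.zero_mul_isBoundedUnder_le (hbdd g Prod.snd))
    simpa only [mem_ofPred_eq, coe_mul, Pi.mul_apply, mul_comm, mul_sub, sub_add_sub_cancel,
      add_zero] using this

theorem mem_uniformlyContinuousSubring {L : Filter (α × α)} {g : α →ᵇ ℝ} :
    g ∈ uniformlyContinuousSubring L ↔ Tendsto (fun p => g p.1 - g p.2) L (𝓝 0) :=
  Iff.rfl

theorem isClosed_uniformlyContinuousSubring (L : Filter (α × α)) :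
    IsClosed (uniformlyContinuousSubring L : Set (α →ᵇ ℝ)) := by
  refine isClosed_of_closure_subset fun g hg => Metric.tendsto_nhds.2 fun ε hε => ?_
  obtain ⟨k, hk, hgk⟩ := Metric.mem_closure_iff.1 hg (ε / 3) (by positivity)
  filter_upwards [Metric.tendsto_nhds.1 hk (ε / 3) (by positivity)] with p hp
  have h₁ := (dist_coe_le_dist (f := g) (g := k) p.1).trans_lt hgk
  have h₂ := (dist_coe_le_dist (f := g) (g := k) p.2).trans_lt hgk
  rw [Real.dist_eq, abs_lt] at h₁ h₂ hp ⊢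
  constructor <;> linarith

end UniformityOfDistances

theorem exists_simultaneously_close_of_mk_lt_dominatingNumber {α : Type} [TopologicalSpace α]
    {D : Set (α → α → ℝ)} (hD : #D < dominatingNumber) (hDtop : ∀ d ∈ D, InducesTopology d)
    {a : ℕ → α} {b : ℕ → ℕ → α} (hb : ∀ n, Tendsto (b n) atTop (𝓝 (a n))) :
    ∃ g : ℕ → ℕ, ∀ F ⊆ D, F.Finite → ∀ δ > 0, ∃ n, ∀ d ∈ F, d (a n) (b n (g n)) < δ := by
  have hclose (d : D) (n : ℕ) : ∀ᶠ j in atTop, d.1 (a n) (b n j) < 1 / (n + 1) :=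
    hb n <| (hDtop d d.2 (a n) _).2 ⟨1 / (n + 1), by positivity, fun _ hy => hy⟩
  choose k hk using fun d n => eventually_atTop.1 (hclose d n)
  obtain ⟨g, hg⟩ := exists_frequently_forall_mem_lt_of_mk_lt_dominatingNumber hD k
  refine ⟨g, fun F hFD hF δ hδ => ?_⟩
  let s : Finset D := (hF.preimage Subtype.val_injective.injOn).toFinset
  have hsmall : ∀ᶠ n : ℕ in atTop, 1 / ((n : ℝ) + 1) < δ :=
    tendsto_one_div_add_atTop_nhds_zero_nat.eventually (gt_mem_nhds hδ)
  obtain ⟨n, hn, hnδ⟩ := ((hg s).and_eventually hsmall).exists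
  exact ⟨n, fun d hd => (hk ⟨d, hFD hd⟩ n (g n) (hn _ (by simpa [s] using hd)).le).trans hnδ⟩

theorem UStar_eq_uniformlyContinuousSubring (d : Ici (0:ℝ) → Ici (0:ℝ) → ℝ) :
    UStar d = uniformlyContinuousSubring (distUniformity {d}) := by
  ext g
  rw [SetLike.mem_coe, mem_uniformlyContinuousSubring,
    (hasBasis_distUniformity _).tendsto_iff Metric.nhds_basis_closedBall]
  simp [UStar]

theorem closure_subringClosure_UStar_subset (F : Set (Ici (0:ℝ) → Ici (0:ℝ) → ℝ)) :
    closure (Subring.closure (⋃ d ∈ F, UStar d) : Set (Ici (0:ℝ) →ᵇ ℝ)) ⊆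
      uniformlyContinuousSubring (distUniformity F) := by
  refine closure_minimal (Subring.closure_le.2 (iUnion₂_subset fun d hd => ?_))
    (isClosed_uniformlyContinuousSubring _)
  rw [UStar_eq_uniformlyContinuousSubring]
  exact fun g hg => hg.mono_left (distUniformity_anti (singleton_subset_iff.2 hd))

theorem isClosed_range_of_tendsto_dist_atTop {α : Type*} [MetricSpace α] {s : ℕ → α} (x : α)
    (h : Tendsto (fun n => dist (s n) x) atTop atTop) : IsClosed (range s) := by
  refine (isProperMap_iff_tendsto_cocompact.2 ⟨continuous_of_discreteTopology, ?_⟩).isClosed_range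
  rw [cocompact_eq_cofinite, Nat.cofinite_eq_atTop]
  exact tendsto_cocompact_of_tendsto_dist_comp_atTop x h

def natPt (n : ℕ) : Ici (0:ℝ) := ⟨n, mem_Ici.2 n.cast_nonneg⟩

noncomputable def nearPt (n j : ℕ) : Ici (0:ℝ) := ⟨n + 1 / (j + 2), mem_Ici.2 (by positivity)⟩

theorem tendsto_nearPt (n : ℕ) : Tendsto (nearPt n) atTop (𝓝 (natPt n)) := by
  have h : Tendsto (fun j : ℕ => 1 / ((j : ℝ) + 2)) atTop (𝓝 0) :=
    tendsto_const_nhds.div_atTop (tendsto_atTop_add_const_right _ 2 tendsto_natCast_atTop_atTop)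
  simpa [tendsto_subtype_rng, nearPt, natPt] using h.const_add (n : ℝ)

theorem isClosed_range_of_natCast_le {s : ℕ → Ici (0:ℝ)} (hs : ∀ n : ℕ, (n : ℝ) ≤ s n) :
    IsClosed (range s) :=
  isClosed_range_of_tendsto_dist_atTop (natPt 0) <|
    tendsto_atTop_mono (fun n => by
      simpa [Subtype.dist_eq, natPt] using (hs n).trans (le_abs_self _)) tendsto_natCast_atTop_atTop

theorem disjoint_range_natPt_nearPt (g : ℕ → ℕ) :
    Disjoint (range natPt) (range fun n => nearPt n (g n)) := by
  rw [disjoint_left]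
  rintro _ ⟨n, rfl⟩ ⟨m, hm⟩
  have hval : (m : ℝ) + 1 / (g m + 2) = n := congrArg Subtype.val hm
  have hpos : 0 < 1 / ((g m : ℝ) + 2) := by positivity
  have hlt : 1 / ((g m : ℝ) + 2) < 1 := by
    rw [div_lt_one (by positivity)]; linarith [(g m).cast_nonneg (α := ℝ)]
  have : m < n := by exact_mod_cast (by linarith : (m : ℝ) < n)
  have : n < m + 1 := by exact_mod_cast (by linarith : (n : ℝ) < m + 1)
  omega

/-- If `κ < 𝔡` and `D` is a family of compatible metrics on
`[0,∞)` with `|D| = κ`, then there are disjoint closed sets `A`, `B` that no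
function in the uniform closure of the ring generated by the `U*_d` for `d`
in a finite nonempty `F ⊆ D` can separate by levels `a > b`. -/
theorem stmt5 (κ : Cardinal) (hκ : κ < dominatingNumber)
    (D : Set (Set.Ici (0:ℝ) → Set.Ici (0:ℝ) → ℝ))
    (hD : ∀ d ∈ D, IsMetricOn d ∧ InducesTopology d)
    (hcard : Cardinal.mk D = κ) :
    ∃ A B : Set (Set.Ici (0:ℝ)), IsClosed A ∧ IsClosed B ∧ Disjoint A B ∧
      ∀ F ⊆ D, F.Finite → F.Nonempty →
        ∀ φ ∈ closure ((Subring.closure (⋃ d ∈ F, UStar d)) :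
            Set (BoundedContinuousFunction (Set.Ici (0:ℝ)) ℝ)),
          ¬ ∃ a b : ℝ, b < a ∧ (∀ x ∈ A, a ≤ φ x) ∧ (∀ x ∈ B, φ x ≤ b) := by
  obtain ⟨g, hg⟩ := exists_simultaneously_close_of_mk_lt_dominatingNumber (hcard ▸ hκ)
    (fun d hd => (hD d hd).2) tendsto_nearPt
  refine ⟨range natPt, range fun n => nearPt n (g n), isClosed_range_of_natCast_le fun n => le_rfl,
    isClosed_range_of_natCast_le fun n => le_add_of_nonneg_right (by positivity),
    disjoint_range_natPt_nearPt g, ?_⟩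
  rintro F hFD hF - φ hφ ⟨a, b, hba, hA, hB⟩
  have hφF := closure_subringClosure_UStar_subset F hφ
  obtain ⟨δ, hδ, hsep⟩ := (hasBasis_distUniformity F).eventually_iff.1 <|
    (mem_uniformlyContinuousSubring.1 hφF).eventually (Metric.ball_mem_nhds (0 : ℝ) (sub_pos.2 hba))
  obtain ⟨n, hn⟩ := hg F hFD hF δ hδ
  have hφn : dist (φ (natPt n) - φ (nearPt n (g n))) 0 < a - b :=
    @hsep (natPt n, nearPt n (g n)) fun d hd => (hn d hd).le
  rw [Real.dist_eq, sub_zero, abs_lt] at hφn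
  linarith [hA _ ⟨n, rfl⟩, hB _ ⟨n, rfl⟩]
end

section
/- There exists a family D of metrics on ω of cardinality 𝔲, directed under the relation d₁ ⪯ d₂ (meaning the identity map (ω,d₂) → (ω,d₁) is uniformly continuous), such that for every B ⊆ ω there is a metric d ∈ D with d(B, ω∖B) > 0, yet for every single d ∈ D there exists B ⊆ ω with d(B, ω∖B) = 0. -/
/-- `d₁ ⪯ d₂`: the identity map `(ω, d₂) → (ω, d₁)` is uniformly continuous. -/
def MetricLE {α : Type*} (d₁ d₂ : α → α → ℝ) : Prop :=
  ∀ ε > (0:ℝ), ∃ δ > (0:ℝ), ∀ x y, d₂ x y < δ → d₁ x y < ε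

/-- The ultrafilter number `𝔲`: the least cardinality of a family of subsets
of `ω` generating a non-principal ultrafilter. -/
noncomputable def uNumber : Cardinal :=
  sInf {c : Cardinal | ∃ (𝒰 : Set (Set ℕ)) (U : Ultrafilter ℕ),
    Cardinal.mk 𝒰 = c ∧ (U : Filter ℕ) ≤ Filter.cofinite ∧
    (∀ X ∈ 𝒰, X ∈ U) ∧ ∀ X ∈ U, ∃ Y ∈ 𝒰, Y ⊆ X}

/-!
For a generating family `𝒰` of a non-principal ultrafilter `U`, take `D = {d_X : X ∈ 𝒰}`.
Every `X ∈ 𝒰` is infinite and `X` is recovered from `d_X` as the set of points at distance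
`< 1` from another point, so `#D = #𝒰`. Shrinking `X` makes `d_X` finer, and `𝒰` is a base
of `U`, so `D` is directed. If `Y ∈ 𝒰` lies inside `B` or inside its complement (one of them is
in `U`), then `d_Y` puts `B` and its complement at distance `1`. Conversely, inside a fixed
infinite `X` the points `2^{-x}` accumulate, so alternately colouring the elements of `X` gives
a set `B` at distance `0` from its complement for `d_X`.
-/

open Set Filter

lemma Set.infinite_of_mem_of_le_cofinite {α : Type*} {l : Filter α} [l.NeBot]
    (hl : l ≤ cofinite) {s : Set α} (hs : s ∈ l) : s.Infinite :=
  cofinite_inf_principal_neBot_iff.mp (NeBot.mono ‹_› (le_inf hl (le_principal_iff.mpr hs)))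

lemma exists_ultrafilter_base_card_eq_uNumber :
    ∃ (𝒰 : Set (Set ℕ)) (U : Ultrafilter ℕ), Cardinal.mk 𝒰 = uNumber ∧
      (U : Filter ℕ) ≤ cofinite ∧ (∀ X ∈ 𝒰, X ∈ U) ∧ ∀ X ∈ U, ∃ Y ∈ 𝒰, Y ⊆ X := by
  obtain ⟨U, hU⟩ := Ultrafilter.exists_le (cofinite : Filter ℕ)
  exact (csInf_mem ⟨_, {X | X ∈ U}, U, rfl, hU, fun _ hX => hX, fun X hX => ⟨X, hX, subset_rfl⟩⟩ :
    uNumber ∈ _)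

lemma abs_two_inv_pow_sub_lt_one (x y : ℕ) : |(2:ℝ)⁻¹ ^ x - 2⁻¹ ^ y| < 1 := by
  have hx : (0:ℝ) < 2⁻¹ ^ x := by positivity
  have hy : (0:ℝ) < 2⁻¹ ^ y := by positivity
  have hx' : (2:ℝ)⁻¹ ^ x ≤ 1 := pow_le_one₀ (by norm_num) (by norm_num)
  have hy' : (2:ℝ)⁻¹ ^ y ≤ 1 := pow_le_one₀ (by norm_num) (by norm_num)
  rw [abs_sub_lt_iff]
  constructor <;> linarith

open Classical in
noncomputable def dX (X : Set ℕ) (x y : ℕ) : ℝ :=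
  if x = y then 0 else if x ∈ X ∧ y ∈ X then |(2:ℝ)⁻¹ ^ x - 2⁻¹ ^ y| else 1

section dX

variable {X : Set ℕ} {x y : ℕ}

@[simp]
lemma dX_self (X : Set ℕ) (x : ℕ) : dX X x x = 0 := by simp [dX]

lemma dX_of_mem (hxy : x ≠ y) (hx : x ∈ X) (hy : y ∈ X) :
    dX X x y = |(2:ℝ)⁻¹ ^ x - 2⁻¹ ^ y| := by
  simp [dX, hxy, hx, hy]

lemma dX_of_notMem_left (hxy : x ≠ y) (hx : x ∉ X) : dX X x y = 1 := by
  simp [dX, hxy, hx]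

lemma dX_of_notMem_right (hxy : x ≠ y) (hy : y ∉ X) : dX X x y = 1 := by
  simp [dX, hxy, hy]

lemma dX_nonneg (X : Set ℕ) (x y : ℕ) : 0 ≤ dX X x y := by
  unfold dX
  split_ifs <;> positivity

lemma dX_le_one (X : Set ℕ) (x y : ℕ) : dX X x y ≤ 1 := by
  unfold dX
  split_ifs
  exacts [zero_le_one, (abs_two_inv_pow_sub_lt_one x y).le, le_rfl]

lemma dX_comm (X : Set ℕ) (x y : ℕ) : dX X x y = dX X y x := by
  unfold dX
  rcases eq_or_ne x y with rfl | hxy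
  · rfl
  rw [if_neg hxy, if_neg hxy.symm]
  by_cases hm : x ∈ X ∧ y ∈ X
  · rw [if_pos hm, if_pos hm.symm, abs_sub_comm]
  · rw [if_neg hm, if_neg (mt And.symm hm)]

lemma dX_eq_zero_iff : dX X x y = 0 ↔ x = y := by
  refine ⟨fun h => ?_, by rintro rfl; exact dX_self X x⟩
  by_contra hxy
  by_cases hx : x ∈ X <;> by_cases hy : y ∈ X
  · rw [dX_of_mem hxy hx hy, abs_eq_zero, sub_eq_zero] at h
    exact hxy (pow_right_injective₀ (by norm_num) (by norm_num) h)
  all_goals simp_all [dX_of_notMem_left, dX_of_notMem_right]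

lemma dX_triangle (X : Set ℕ) (x y z : ℕ) : dX X x z ≤ dX X x y + dX X y z := by
  rcases eq_or_ne x z with rfl | hxz
  · simpa using add_nonneg (dX_nonneg X x y) (dX_nonneg X y x)
  rcases eq_or_ne x y with rfl | hxy
  · simp
  rcases eq_or_ne y z with rfl | hyz
  · simp
  have hxz_le := dX_le_one X x z
  by_cases hx : x ∉ X
  · linarith [dX_of_notMem_left hxy hx, dX_nonneg X y z]
  by_cases hz : z ∉ X
  · linarith [dX_of_notMem_right hyz hz, dX_nonneg X x y]
  by_cases hy : y ∉ X
  · linarith [dX_of_notMem_right hxy hy, dX_nonneg X y z]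
  rw [not_not] at hx hy hz
  rw [dX_of_mem hxz hx hz, dX_of_mem hxy hx hy, dX_of_mem hyz hy hz]
  exact abs_sub_le _ _ _

lemma isMetricOn_dX (X : Set ℕ) : IsMetricOn (dX X) :=
  ⟨fun _ _ => dX_eq_zero_iff, dX_comm X, dX_triangle X⟩

lemma metricLE_dX_of_subset {Y : Set ℕ} (hYX : Y ⊆ X) : MetricLE (dX X) (dX Y) := by
  intro ε hε
  refine ⟨min ε 1, lt_min hε one_pos, fun x y hd => ?_⟩
  rcases eq_or_ne x y with rfl | hxy
  · simpa using hε
  by_cases hm : x ∈ Y ∧ y ∈ Y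
  · rw [dX_of_mem hxy hm.1 hm.2] at hd
    rw [dX_of_mem hxy (hYX hm.1) (hYX hm.2)]
    exact hd.trans_le (min_le_left _ _)
  · rw [dX, if_neg hxy, if_neg hm] at hd
    exact absurd hd (min_le_right _ _).not_gt

lemma setOf_exists_dX_lt_one (hX : X.Infinite) : {x | ∃ y ≠ x, dX X x y < 1} = X := by
  ext x
  refine ⟨fun ⟨y, hyx, hd⟩ => ?_, fun hx => ?_⟩
  · by_contra hx
    rw [dX_of_notMem_left hyx.symm hx] at hd
    exact hd.false
  · obtain ⟨y, hy, hyx⟩ := (hX.sdiff (finite_singleton x)).nonempty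
    rw [mem_singleton_iff] at hyx
    exact ⟨y, hyx, by rw [dX_of_mem (Ne.symm hyx) hx hy]; exact abs_two_inv_pow_sub_lt_one x y⟩

lemma injOn_dX : InjOn dX {X | X.Infinite} := fun X hX Y hY h => by
  rw [← setOf_exists_dX_lt_one hX, ← setOf_exists_dX_lt_one hY, h]

lemma dX_eq_one_of_subset_or_subset_compl {B : Set ℕ} (hXB : X ⊆ B ∨ X ⊆ Bᶜ) (hx : x ∈ B)
    (hy : y ∉ B) : dX X x y = 1 := by
  have hxy : x ≠ y := ne_of_mem_of_not_mem hx hy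
  rcases hXB with hXB | hXB
  · exact dX_of_notMem_right hxy (fun h => hy (hXB h))
  · exact dX_of_notMem_left hxy (fun h => hXB h hx)

lemma dX_nth_nth_succ_lt (hX : X.Infinite) (k : ℕ) :
    dX X (Nat.nth (· ∈ X) k) (Nat.nth (· ∈ X) (k + 1)) < 2⁻¹ ^ k := by
  set x := Nat.nth (· ∈ X) k
  set y := Nat.nth (· ∈ X) (k + 1)
  have hxy : x < y := Nat.nth_strictMono hX k.lt_succ_self
  have hkx : k ≤ x := Nat.le_nth fun hf => absurd hf hX
  rw [dX_of_mem hxy.ne (Nat.nth_mem_of_infinite hX k) (Nat.nth_mem_of_infinite hX (k + 1))]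
  have hyx : (2:ℝ)⁻¹ ^ y < 2⁻¹ ^ x := pow_lt_pow_right_of_lt_one₀ (by norm_num) (by norm_num) hxy
  have hxk : (2:ℝ)⁻¹ ^ x ≤ 2⁻¹ ^ k := pow_le_pow_of_le_one (by norm_num) (by norm_num) hkx
  have hy : (0:ℝ) < 2⁻¹ ^ y := by positivity
  rw [abs_of_pos (sub_pos.mpr hyx)]
  linarith

lemma exists_set_not_separated_dX (hX : X.Infinite) :
    ∃ B : Set ℕ, ∀ ε > (0:ℝ), ∃ x ∈ B, ∃ y ∉ B, dX X x y < ε := by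
  refine ⟨range fun k => Nat.nth (· ∈ X) (2 * k), fun ε hε => ?_⟩
  obtain ⟨n, hn⟩ := exists_pow_lt_of_lt_one hε (by norm_num : (2:ℝ)⁻¹ < 1)
  refine ⟨_, ⟨n, rfl⟩, Nat.nth (· ∈ X) (2 * n + 1), ?_, ?_⟩
  · rintro ⟨k, hk⟩
    have := Nat.nth_injective hX hk
    omega
  · calc dX X _ _ < 2⁻¹ ^ (2 * n) := dX_nth_nth_succ_lt hX (2 * n)
      _ ≤ 2⁻¹ ^ n := pow_le_pow_of_le_one (by norm_num) (by norm_num) (by omega)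
      _ < ε := hn

end dX

/-- There is a `⪯`-directed family `D` of metrics on `ω` of
cardinality `𝔲` such that every `B ⊆ ω` is at positive distance from its
complement for some `d ∈ D`, but no single `d ∈ D` works for all `B`. -/
theorem stmt11 :
    ∃ D : Set (ℕ → ℕ → ℝ), Cardinal.mk D = uNumber ∧
      (∀ d ∈ D, IsMetricOn d) ∧
      (∀ d₁ ∈ D, ∀ d₂ ∈ D, ∃ d ∈ D, MetricLE d₁ d ∧ MetricLE d₂ d) ∧
      (∀ B : Set ℕ, ∃ d ∈ D, ∃ ε > (0:ℝ), ∀ x ∈ B, ∀ y ∉ B, ε ≤ d x y) ∧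
      (∀ d ∈ D, ∃ B : Set ℕ, ∀ ε > (0:ℝ), ∃ x ∈ B, ∃ y ∉ B, d x y < ε) := by
  obtain ⟨𝒰, U, hcard, hU, h𝒰U, hbase⟩ := exists_ultrafilter_base_card_eq_uNumber
  have hinf : ∀ X ∈ 𝒰, X.Infinite := fun X hX => infinite_of_mem_of_le_cofinite hU (h𝒰U X hX)
  refine ⟨dX '' 𝒰, ?_, ?_, ?_, ?_, ?_⟩
  · rw [← hcard]
    exact Cardinal.mk_image_eq_of_injOn _ _ (injOn_dX.mono hinf)
  · rintro _ ⟨X, -, rfl⟩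
    exact isMetricOn_dX X
  · rintro _ ⟨X₁, hX₁, rfl⟩ _ ⟨X₂, hX₂, rfl⟩
    obtain ⟨Z, hZ, hZX⟩ := hbase _ (inter_mem (h𝒰U _ hX₁) (h𝒰U _ hX₂))
    exact ⟨dX Z, mem_image_of_mem _ hZ, metricLE_dX_of_subset (hZX.trans inter_subset_left),
      metricLE_dX_of_subset (hZX.trans inter_subset_right)⟩
  · intro B
    obtain ⟨Y, hY, hYB⟩ : ∃ Y ∈ 𝒰, Y ⊆ B ∨ Y ⊆ Bᶜ := by
      rcases U.mem_or_compl_mem B with hB | hB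
      · obtain ⟨Y, hY, hYB⟩ := hbase B hB; exact ⟨Y, hY, .inl hYB⟩
      · obtain ⟨Y, hY, hYB⟩ := hbase Bᶜ hB; exact ⟨Y, hY, .inr hYB⟩
    exact ⟨dX Y, mem_image_of_mem _ hY, 1, one_pos, fun x hx y hy =>
      (dX_eq_one_of_subset_or_subset_compl hYB hx hy).ge⟩
  · rintro _ ⟨X, hX, rfl⟩
    exact exists_set_not_separated_dX (hinf X hX)
end

section
/- There exists a family D of metrics on ω of cardinality 𝔩, directed under d₁ ⪯ d₂ (identity map (ω,d₂) → (ω,d₁) uniformly continuous), such that for every f ∈ 2^ω there is d ∈ D with f uniformly continuous from (ω,d) to ℝ, yet no single d ∈ D has the property that all f ∈ 2^ω are d-uniformly continuous. -/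
/-- The cardinal `𝔩`: the least `κ` such that for every `h ∈ ω^ω` there is a
family `Φ` of size `κ` of slaloms `φ` (with `|φ(n)| ≤ n+1`) such that every
`f ∈ Π_n h(n)` is eventually captured by some `φ ∈ Φ`. -/
noncomputable def lNumber : Cardinal :=
  sInf {c : Cardinal | ∀ h : ℕ → ℕ, ∃ Φ : Set (ℕ → Finset ℕ),
    Cardinal.mk Φ = c ∧ (∀ φ ∈ Φ, ∀ n, (φ n).card ≤ n + 1) ∧
    ∀ f : ℕ → ℕ, (∀ n, f n < h n) →
      ∃ φ ∈ Φ, ∀ᶠ n in Filter.atTop, f n ∈ φ n}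

/-- A `{0,1}`-valued function is uniformly continuous from `(ω,d)` to `ℝ`. -/
def BoolUC (d : ℕ → ℕ → ℝ) (f : ℕ → Bool) : Prop :=
  ∀ ε > (0:ℝ), ∃ δ > (0:ℝ), ∀ x y, d x y < δ →
    |(if f x then (1:ℝ) else 0) - (if f y then (1:ℝ) else 0)| < ε

/-!
Split `ω` into consecutive blocks, block `n` of length `L n = 2 ^ ((n+1)²) + 1`, and code the
restriction of `f ∈ 2^ω` to block `n` by a number below `2 ^ L n`. A slalom `A` yields a metric
`d_A`: two distinct points of block `n` that no pattern coded in `A n` tells apart are at distance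
about `2⁻⁽ⁿ⁺¹⁾`, all other pairs of distinct points at distance `1`. If `A` eventually captures the
codes of `f`, then `f` is `d_A`-uniformly continuous; if `|A n| ≤ (n+1)²`, pigeonhole gives two
indistinguishable points in every late block, and the indicator of one point from each pair is not.
For a family `Φ` witnessing `𝔩` with `h n = 2 ^ L n`, the metrics `d_A` with `A` a finite union of
members of `Φ` form the required family: unions make it directed, and perturbing the distance by a
code of the finite set `A n` makes `A ↦ d_A` injective, so the family has size `|Φ| = 𝔩`.
-/

open Filter Topology

section FiberDist

variable {α β : Type*}

open scoped Classical in
noncomputable def fiberDist (k : α → β) (w : β → ℝ) (x y : α) : ℝ :=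
  if x = y then 0 else if k x = k y then w (k x) else 1

variable {k : α → β} {w : β → ℝ} {x y : α}

theorem fiberDist_self (k : α → β) (w : β → ℝ) (x : α) : fiberDist k w x x = 0 := by
  simp [fiberDist]

theorem fiberDist_of_ne_of_eq (hxy : x ≠ y) (h : k x = k y) : fiberDist k w x y = w (k x) := by
  simp [fiberDist, hxy, h]

theorem fiberDist_of_ne (h : k x ≠ k y) : fiberDist k w x y = 1 := by
  have hxy : x ≠ y := fun hxy => h (congrArg k hxy)
  simp [fiberDist, hxy, h]

theorem fiberDist_nonneg (hw : ∀ b, 0 ≤ w b) (x y : α) : 0 ≤ fiberDist k w x y := by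
  unfold fiberDist; split_ifs <;> simp [hw]

theorem fiberDist_le_one (hw : ∀ b, w b ≤ 1) (x y : α) : fiberDist k w x y ≤ 1 := by
  unfold fiberDist; split_ifs <;> simp [hw]

theorem fiberDist_triangle (hpos : ∀ b, 0 < w b) (hle : ∀ b, w b ≤ 1) (x y z : α) :
    fiberDist k w x z ≤ fiberDist k w x y + fiberDist k w y z := by
  have hnonneg : ∀ x y, 0 ≤ fiberDist k w x y := fiberDist_nonneg fun b => (hpos b).le
  by_cases hxz : x = z
  · rw [hxz, fiberDist_self]
    exact add_nonneg (hnonneg _ _) (hnonneg _ _)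
  by_cases hxy : x = y
  · simp [hxy, fiberDist_self]
  by_cases hyz : y = z
  · simp [hyz, fiberDist_self]
  by_cases hkxy : k x = k y
  · by_cases hkyz : k y = k z
    · rw [fiberDist_of_ne_of_eq hxz (hkxy.trans hkyz), fiberDist_of_ne_of_eq hxy hkxy]
      linarith [hnonneg y z]
    · rw [fiberDist_of_ne hkyz]
      linarith [fiberDist_le_one (k := k) hle x z, hnonneg x y]
  · rw [fiberDist_of_ne hkxy]
    linarith [fiberDist_le_one (k := k) hle x z, hnonneg y z]

theorem isMetricOn_fiberDist (hpos : ∀ b, 0 < w b) (hle : ∀ b, w b ≤ 1) :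
    IsMetricOn (fiberDist k w) := by
  refine ⟨fun x y => ?_, fun x y => ?_, fiberDist_triangle hpos hle⟩
  · unfold fiberDist; split_ifs <;> simp_all [(hpos _).ne']
  · unfold fiberDist; split_ifs <;> simp_all [eq_comm]

theorem eq_and_lt_of_fiberDist_lt {δ : ℝ} (hδ : δ ≤ 1) (hxy : x ≠ y)
    (h : fiberDist k w x y < δ) : k x = k y ∧ w (k x) < δ := by
  by_cases hk : k x = k y
  · rw [fiberDist_of_ne_of_eq hxy hk] at h
    exact ⟨hk, h⟩
  · rw [fiberDist_of_ne hk] at h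
    linarith

end FiberDist

theorem metricLE_of_le_mul {α : Type*} {d₁ d₂ : α → α → ℝ} {C : ℝ} (hC : 0 < C)
    (h : ∀ x y, d₁ x y ≤ C * d₂ x y) : MetricLE d₁ d₂ :=
  fun ε hε => ⟨ε / C, div_pos hε hC, fun x y hxy =>
    (h x y).trans_lt (by rwa [lt_div_iff₀ hC, mul_comm] at hxy)⟩

open scoped Classical in
theorem not_boolUC_of_tendsto {d : ℕ → ℕ → ℝ} {x y : ℕ → ℕ} (hxy : ∀ m n, x m ≠ y n)
    (hd : Tendsto (fun n => d (x n) (y n)) atTop (𝓝 0)) :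
    ¬ BoolUC d (fun z => decide (z ∈ Set.range x)) := by
  intro huc
  obtain ⟨δ, hδ, hδd⟩ := huc 1 one_pos
  obtain ⟨n, hn⟩ := (hd.eventually (gt_mem_nhds hδ)).exists
  simpa [hxy] using hδd _ _ hn

theorem boolUC_of_forall_lt {d : ℕ → ℕ → ℝ} {f : ℕ → Bool}
    (h : ∃ δ > 0, ∀ x y, d x y < δ → f x = f y) : BoolUC d f := by
  obtain ⟨δ, hδ, hf⟩ := h
  exact fun ε hε => ⟨δ, hδ, fun x y hxy => by simpa [hf x y hxy] using hε⟩

def blockLen (n : ℕ) : ℕ := 2 ^ ((n + 1) * (n + 1)) + 1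

def blockStart : ℕ → ℕ
  | 0 => 0
  | n + 1 => blockStart n + blockLen n

def blockOf (x : ℕ) : ℕ := Nat.findGreatest (fun n => blockStart n ≤ x) x

theorem blockStart_strictMono : StrictMono blockStart :=
  strictMono_nat_of_lt_succ fun _ => Nat.lt_add_of_pos_right (Nat.succ_pos _)

theorem blockStart_blockOf_le (x : ℕ) : blockStart (blockOf x) ≤ x :=
  Nat.findGreatest_spec (P := fun n => blockStart n ≤ x) (Nat.zero_le x) (Nat.zero_le x)

theorem lt_blockStart_blockOf_succ (x : ℕ) : x < blockStart (blockOf x + 1) := by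
  by_contra! h
  exact Nat.findGreatest_is_greatest (Nat.lt_succ_self _)
    ((blockStart_strictMono.id_le _).trans h) h

theorem blockOf_eq {n x : ℕ} (h₁ : blockStart n ≤ x) (h₂ : x < blockStart (n + 1)) :
    blockOf x = n := by
  have h₃ := blockStart_blockOf_le x
  have h₄ := lt_blockStart_blockOf_succ x
  rcases lt_trichotomy (blockOf x) n with h | h | h
  · have := blockStart_strictMono.monotone (show blockOf x + 1 ≤ n from h); omega
  · exact h
  · have := blockStart_strictMono.monotone (show n + 1 ≤ blockOf x from h); omega

theorem blockOf_blockStart_add {n j : ℕ} (hj : j < blockLen n) :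
    blockOf (blockStart n + j) = n :=
  blockOf_eq (Nat.le_add_right _ _) (by rw [blockStart]; omega)

theorem sub_blockStart_lt_blockLen (x : ℕ) :
    x - blockStart (blockOf x) < blockLen (blockOf x) := by
  have h₁ := blockStart_blockOf_le x
  have h₂ := lt_blockStart_blockOf_succ x
  rw [blockStart] at h₂
  omega

noncomputable def blockPatternEquiv (n : ℕ) : (Fin (blockLen n) → Bool) ≃ Fin (2 ^ blockLen n) :=
  Fintype.equivFinOfCardEq (by simp)

noncomputable def blockCode (f : ℕ → Bool) (n : ℕ) : ℕ :=
  blockPatternEquiv n fun j => f (blockStart n + j)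

theorem blockCode_lt (f : ℕ → Bool) (n : ℕ) : blockCode f n < 2 ^ blockLen n :=
  Fin.is_lt _

noncomputable def codeBit (c x : ℕ) : Bool :=
  if h : c < 2 ^ blockLen (blockOf x) then
    (blockPatternEquiv (blockOf x)).symm ⟨c, h⟩
      ⟨x - blockStart (blockOf x), sub_blockStart_lt_blockLen x⟩
  else false

theorem codeBit_blockCode (f : ℕ → Bool) (x : ℕ) : codeBit (blockCode f (blockOf x)) x = f x := by
  rw [codeBit, dif_pos (blockCode_lt f _)]
  simp only [blockCode, Fin.eta, Equiv.symm_apply_apply]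
  rw [Nat.add_sub_cancel' (blockStart_blockOf_le x)]

theorem two_pow_lt_blockLen {k n : ℕ} (hk : k ≤ (n + 1) * (n + 1)) : 2 ^ k < blockLen n :=
  Nat.lt_succ_of_le (Nat.pow_le_pow_right two_pos hk)

noncomputable def slalomWeight (s : Finset ℕ) : ℝ := ((Encodable.encode s : ℝ) + 2)⁻¹

noncomputable def blockScale (n : ℕ) (s : Finset ℕ) : ℝ := (1 + slalomWeight s) / 2 ^ (n + 1)

theorem slalomWeight_pos (s : Finset ℕ) : 0 < slalomWeight s := by
  unfold slalomWeight; positivity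

theorem slalomWeight_le_half (s : Finset ℕ) : slalomWeight s ≤ 1 / 2 := by
  rw [slalomWeight, one_div]
  exact inv_anti₀ two_pos (by simp)

theorem blockScale_injective (n : ℕ) : Function.Injective (blockScale n) := by
  intro s t h
  simpa [blockScale, slalomWeight] using h

theorem lt_blockScale (n : ℕ) (s : Finset ℕ) : 1 / 2 ^ (n + 1) < blockScale n s := by
  unfold blockScale
  gcongr
  linarith [slalomWeight_pos s]

theorem blockScale_le (n : ℕ) (s : Finset ℕ) : blockScale n s ≤ 3 / 2 / 2 ^ (n + 1) := by
  unfold blockScale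
  gcongr
  linarith [slalomWeight_le_half s]

theorem blockScale_pos (n : ℕ) (s : Finset ℕ) : 0 < blockScale n s :=
  lt_trans (by positivity) (lt_blockScale n s)

theorem blockScale_lt_one (n : ℕ) (s : Finset ℕ) : blockScale n s < 1 := by
  refine (blockScale_le n s).trans_lt ?_
  rw [div_lt_one (by positivity), pow_succ]
  nlinarith [one_le_pow₀ (M₀ := ℝ) (a := 2) one_le_two (n := n)]

noncomputable def signature (A : ℕ → Finset ℕ) (x : ℕ) : ℕ × (ℕ → Bool) :=
  (blockOf x, fun c => decide (c ∈ A (blockOf x)) && codeBit c x)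

noncomputable def slalomDist (A : ℕ → Finset ℕ) : ℕ → ℕ → ℝ :=
  fiberDist (signature A) fun b => blockScale b.1 (A b.1)

section SlalomDist

variable {A B : ℕ → Finset ℕ}

theorem signature_eq_iff {x y : ℕ} : signature A x = signature A y ↔
    blockOf x = blockOf y ∧ ∀ c ∈ A (blockOf x), codeBit c x = codeBit c y := by
  simp only [signature, Prod.mk.injEq, funext_iff]
  refine and_congr_right fun hb => ⟨fun h c hc => by simpa [← hb, hc] using h c, fun h c => ?_⟩
  by_cases hc : c ∈ A (blockOf x)
  · simp [← hb, hc, h c hc]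
  · simp [← hb, hc]

theorem isMetricOn_slalomDist (A : ℕ → Finset ℕ) : IsMetricOn (slalomDist A) :=
  isMetricOn_fiberDist (fun _ => blockScale_pos _ _) fun _ => (blockScale_lt_one _ _).le

theorem slalomDist_le_two_mul (hAB : ∀ n, A n ⊆ B n) (x y : ℕ) :
    slalomDist A x y ≤ 2 * slalomDist B x y := by
  by_cases hxy : x = y
  · simp [hxy, slalomDist, fiberDist_self]
  by_cases hB : signature B x = signature B y
  · have hA : signature A x = signature A y := by
      rw [signature_eq_iff] at hB ⊢
      exact ⟨hB.1, fun c hc => hB.2 c (hAB _ hc)⟩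
    rw [slalomDist, slalomDist, fiberDist_of_ne_of_eq hxy hA, fiberDist_of_ne_of_eq hxy hB]
    have hleA := blockScale_le (blockOf x) (A (blockOf x))
    have hltB := lt_blockScale (blockOf x) (B (blockOf x))
    have hsplit : (3 / 2 : ℝ) / 2 ^ (blockOf x + 1) = 3 / 2 * (1 / 2 ^ (blockOf x + 1)) := by ring
    have hpos : (0 : ℝ) < 1 / 2 ^ (blockOf x + 1) := by positivity
    simp only [signature]
    linarith
  · rw [slalomDist, slalomDist, fiberDist_of_ne hB]
    linarith [fiberDist_le_one (k := signature A) (fun b => (blockScale_lt_one b.1 (A b.1)).le) x y]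

theorem metricLE_slalomDist (hAB : ∀ n, A n ⊆ B n) : MetricLE (slalomDist A) (slalomDist B) :=
  metricLE_of_le_mul two_pos (slalomDist_le_two_mul hAB)

theorem exists_ne_signature_eq {n : ℕ} (hA : 2 ^ (A n).card < blockLen n) :
    ∃ x y, x ≠ y ∧ blockOf x = n ∧ signature A x = signature A y := by
  have hcard : Fintype.card (A n → Bool) < Fintype.card (Fin (blockLen n)) := by simpa using hA
  obtain ⟨i, j, hij, hbits⟩ := Fintype.exists_ne_map_eq_of_card_lt
    (fun j : Fin (blockLen n) => fun c : A n => codeBit c (blockStart n + j)) hcard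
  refine ⟨blockStart n + i, blockStart n + j, by simpa [Fin.ext_iff] using hij,
    blockOf_blockStart_add i.2, signature_eq_iff.2 ⟨?_, fun c hc => ?_⟩⟩
  · rw [blockOf_blockStart_add i.2, blockOf_blockStart_add j.2]
  · rw [blockOf_blockStart_add i.2] at hc
    exact congrFun hbits ⟨c, hc⟩

theorem slalomDist_injective (hA : ∀ n, 2 ^ (A n).card < blockLen n)
    (h : slalomDist A = slalomDist B) : A = B := by
  funext n
  obtain ⟨x, y, hxy, rfl, hsig⟩ := exists_ne_signature_eq (hA n)
  have hdA : slalomDist A x y = blockScale (blockOf x) (A (blockOf x)) :=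
    fiberDist_of_ne_of_eq hxy hsig
  have hsigB : signature B x = signature B y := by
    by_contra hne
    have hdB : slalomDist B x y = 1 := fiberDist_of_ne hne
    rw [← h, hdA] at hdB
    exact (blockScale_lt_one _ _).ne hdB
  have hdB : slalomDist B x y = blockScale (blockOf x) (B (blockOf x)) :=
    fiberDist_of_ne_of_eq hxy hsigB
  exact blockScale_injective _ (by rw [← hdA, ← hdB, h])

theorem boolUC_slalomDist {f : ℕ → Bool} (h : ∀ᶠ n in atTop, blockCode f n ∈ A n) :
    BoolUC (slalomDist A) f := by
  obtain ⟨N, hcode⟩ := eventually_atTop.1 h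
  refine boolUC_of_forall_lt ⟨1 / 2 ^ (N + 1), by positivity, fun x y hd => ?_⟩
  by_cases hxy : x = y
  · rw [hxy]
  obtain ⟨hsig, hscale⟩ := eq_and_lt_of_fiberDist_lt
    (div_le_one_of_le₀ (one_le_pow₀ one_le_two) (by positivity)) hxy hd
  have hN : N ≤ blockOf x := by
    have := (lt_blockScale (blockOf x) _).trans hscale
    rw [one_div_lt_one_div (by positivity) (by positivity),
      pow_lt_pow_iff_right₀ one_lt_two] at this
    omega
  obtain ⟨hb, hbits⟩ := signature_eq_iff.1 hsig
  have := hbits _ (hcode _ hN)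
  rwa [codeBit_blockCode, hb, codeBit_blockCode] at this

theorem exists_not_boolUC_slalomDist (h : ∀ᶠ n in atTop, 2 ^ (A n).card < blockLen n) :
    ∃ f, ¬ BoolUC (slalomDist A) f := by
  obtain ⟨M, hM⟩ := eventually_atTop.1 h
  choose x y hxy hblock hsig using fun n => exists_ne_signature_eq (hM (n + M) le_add_self)
  refine ⟨_, not_boolUC_of_tendsto (x := x) (y := y) (fun m n hmn => ?_) ?_⟩
  · have hmn' : m = n := by
      have := congrArg blockOf hmn
      rw [hblock m, ← (signature_eq_iff.1 (hsig n)).1, hblock n] at this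
      omega
    exact hxy n (hmn' ▸ hmn)
  · have hd : ∀ n, slalomDist A (x n) (y n) = blockScale (n + M) (A (n + M)) := fun n => by
      rw [slalomDist, fiberDist_of_ne_of_eq (hxy n) (hsig n)]
      simp only [signature, hblock]
    simp only [hd]
    refine squeeze_zero (fun n => (blockScale_pos _ _).le) (fun n => blockScale_le _ _) ?_
    exact tendsto_const_nhds.div_atTop <| (tendsto_pow_atTop_atTop_of_one_lt one_lt_two).comp <|
      tendsto_add_atTop_nat (M + 1)

end SlalomDist

theorem lNumber_spec (h : ℕ → ℕ) : ∃ Φ : Set (ℕ → Finset ℕ), Cardinal.mk Φ = lNumber ∧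
    (∀ φ ∈ Φ, ∀ n, (φ n).card ≤ n + 1) ∧
    ∀ f : ℕ → ℕ, (∀ n, f n < h n) → ∃ φ ∈ Φ, ∀ᶠ n in atTop, f n ∈ φ n :=
  csInf_mem (s := {c : Cardinal | ∀ h : ℕ → ℕ, ∃ Φ : Set (ℕ → Finset ℕ),
    Cardinal.mk Φ = c ∧ (∀ φ ∈ Φ, ∀ n, (φ n).card ≤ n + 1) ∧
    ∀ f : ℕ → ℕ, (∀ n, f n < h n) → ∃ φ ∈ Φ, ∀ᶠ n in atTop, f n ∈ φ n})
    ⟨_, fun _ => ⟨Set.range fun (g : ℕ → ℕ) n => {g n}, rfl, by simp,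
      fun f _ => ⟨_, ⟨f, rfl⟩, by simp⟩⟩⟩ h

theorem aleph0_le_lNumber : Cardinal.aleph0 ≤ lNumber := by
  by_contra! hlt
  obtain ⟨M, hM⟩ := Cardinal.lt_aleph0.1 hlt
  obtain ⟨Φ, hmk, hw, hcap⟩ := lNumber_spec fun n => M * (n + 1) + 1
  have hfin : Φ.Finite := Cardinal.lt_aleph0_iff_set_finite.1 (hmk ▸ hlt)
  have hcard : hfin.toFinset.card = M := by
    have := hfin.to_subtype
    rw [← Nat.card_eq_card_finite_toFinset, ← Nat.cast_inj (R := Cardinal), Nat.cast_card, hmk, hM]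
  have hmiss : ∀ n, ∃ k ∈ Finset.range (M * (n + 1) + 1), k ∉ hfin.toFinset.biUnion (· n) :=
    fun n => Finset.exists_mem_notMem_of_card_lt_card <| by
      calc (hfin.toFinset.biUnion (· n)).card ≤ hfin.toFinset.card * (n + 1) :=
            Finset.card_biUnion_le_card_mul _ _ _ fun φ hφ => hw φ (hfin.mem_toFinset.1 hφ) n
        _ < (Finset.range (M * (n + 1) + 1)).card := by simp [hcard]
  choose f hf hfΦ using hmiss
  obtain ⟨φ, hφ, hev⟩ := hcap f fun n => Finset.mem_range.1 (hf n)
  obtain ⟨n, hn⟩ := hev.exists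
  exact hfΦ n (Finset.mem_biUnion.2 ⟨φ, hfin.mem_toFinset.2 hφ, hn⟩)

section SlalomFamily

variable {Φ : Set (ℕ → Finset ℕ)}

def unionSlalom (F : Finset Φ) (n : ℕ) : Finset ℕ := F.biUnion fun φ => φ.1 n

variable (Φ) in
noncomputable def slalomDistFamily : Set (ℕ → ℕ → ℝ) :=
  Set.range fun F : Finset Φ => slalomDist (unionSlalom F)

variable (hw : ∀ φ ∈ Φ, ∀ n, (φ n).card ≤ n + 1)
include hw

theorem card_unionSlalom_le (F : Finset Φ) (n : ℕ) : (unionSlalom F n).card ≤ F.card * (n + 1) :=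
  Finset.card_biUnion_le_card_mul _ _ _ fun φ _ => hw φ φ.2 n

theorem mk_slalomDistFamily [Infinite Φ] : Cardinal.mk (slalomDistFamily Φ) = Cardinal.mk Φ := by
  refine le_antisymm (Cardinal.mk_range_le.trans (Cardinal.mk_finset_of_infinite Φ).le) ?_
  refine Cardinal.mk_le_of_injective (f := fun φ => ⟨_, {φ}, rfl⟩) fun φ ψ h => Subtype.ext ?_
  have hsmall : ∀ n, 2 ^ (unionSlalom {φ} n).card < blockLen n := fun n =>
    two_pow_lt_blockLen <| by
      simpa [unionSlalom] using (hw φ φ.2 n).trans (Nat.le_mul_of_pos_left _ n.succ_pos)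
  have := slalomDist_injective hsmall (congrArg Subtype.val h)
  funext n
  simpa [unionSlalom] using congrFun this n

theorem exists_not_boolUC_of_mem_slalomDistFamily {d : ℕ → ℕ → ℝ} (hd : d ∈ slalomDistFamily Φ) :
    ∃ f, ¬ BoolUC d f := by
  obtain ⟨F, rfl⟩ := hd
  refine exists_not_boolUC_slalomDist (eventually_atTop.2 ⟨F.card, fun n hn => ?_⟩)
  refine two_pow_lt_blockLen ((card_unionSlalom_le hw F n).trans ?_)
  exact Nat.mul_le_mul_right _ (by omega)

end SlalomFamily

theorem directed_slalomDistFamily (Φ : Set (ℕ → Finset ℕ)) :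
    ∀ d₁ ∈ slalomDistFamily Φ, ∀ d₂ ∈ slalomDistFamily Φ,
      ∃ d ∈ slalomDistFamily Φ, MetricLE d₁ d ∧ MetricLE d₂ d := by
  classical
  rintro _ ⟨F₁, rfl⟩ _ ⟨F₂, rfl⟩
  exact ⟨_, ⟨F₁ ∪ F₂, rfl⟩,
    metricLE_slalomDist fun _ =>
      Finset.biUnion_subset_biUnion_of_subset_left _ Finset.subset_union_left,
    metricLE_slalomDist fun _ =>
      Finset.biUnion_subset_biUnion_of_subset_left _ Finset.subset_union_right⟩

theorem exists_boolUC_mem_slalomDistFamily {Φ : Set (ℕ → Finset ℕ)}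
    (hcap : ∀ f : ℕ → ℕ, (∀ n, f n < 2 ^ blockLen n) → ∃ φ ∈ Φ, ∀ᶠ n in atTop, f n ∈ φ n)
    (f : ℕ → Bool) : ∃ d ∈ slalomDistFamily Φ, BoolUC d f := by
  obtain ⟨φ, hφ, hev⟩ := hcap (blockCode f) (blockCode_lt f)
  exact ⟨_, ⟨{⟨φ, hφ⟩}, rfl⟩, boolUC_slalomDist (by simpa [unionSlalom] using hev)⟩

/-- There exists a `⪯`-directed family `D` of metrics on `ω` of
cardinality `𝔩` such that every `f ∈ 2^ω` is uniformly continuous with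
respect to some `d ∈ D`, but no single `d ∈ D` makes all `f ∈ 2^ω` uniformly
continuous. -/
theorem stmt14 :
    ∃ D : Set (ℕ → ℕ → ℝ), Cardinal.mk D = lNumber ∧
      (∀ d ∈ D, IsMetricOn d) ∧
      (∀ d₁ ∈ D, ∀ d₂ ∈ D, ∃ d ∈ D, MetricLE d₁ d ∧ MetricLE d₂ d) ∧
      (∀ f : ℕ → Bool, ∃ d ∈ D, BoolUC d f) ∧
      (∀ d ∈ D, ∃ f : ℕ → Bool, ¬ BoolUC d f) := by
  obtain ⟨Φ, hmk, hw, hcap⟩ := lNumber_spec fun n => 2 ^ blockLen n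
  have : Infinite Φ := Cardinal.infinite_iff.2 (hmk ▸ aleph0_le_lNumber)
  refine ⟨slalomDistFamily Φ, (mk_slalomDistFamily hw).trans hmk, ?_,
    directed_slalomDistFamily Φ, exists_boolUC_mem_slalomDistFamily hcap,
    fun d hd => exists_not_boolUC_of_mem_slalomDistFamily hw hd⟩
  rintro _ ⟨F, rfl⟩
  exact isMetricOn_slalomDist _
end

section
/- The set A = {(f₁, f₂) ∈ ℝ^{ω×ω} × ℝ^{ω×ω} : for all rational ε > 0 there exists rational δ > 0 such that for all (x,y) ∈ ω×ω, f₂(x,y) ≥ δ or f₁(x,y) ≤ ε} is a Π⁰₃ subset of the Polish space (ℝ^{ω×ω})², and for metrics d₁, d₂ on ω, (d₁, d₂) ∈ A if and only if the identity map from (ω, d₂) to (ω, d₁) is uniformly continuous. -/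
/-- `d` (in uncurried form) is a metric on `α`. -/
def IsMetricOn2 {α : Type*} (d : α × α → ℝ) : Prop :=
  (∀ x y, d (x, y) = 0 ↔ x = y) ∧ (∀ x y, d (x, y) = d (y, x)) ∧
    ∀ x y z, d (x, z) ≤ d (x, y) + d (y, z)

/-- A `Π⁰₃` set: a countable intersection of countable unions of closed sets. -/
def IsPi03 {α : Type*} [TopologicalSpace α] (s : Set α) : Prop :=
  ∃ C : ℕ → ℕ → Set α, (∀ i j, IsClosed (C i j)) ∧ s = ⋂ i, ⋃ j, C i j

/-!
The set is the intersection over rational `ε > 0` of the union over rational `δ > 0` of the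
sets `{p | ∀ q, δ ≤ p.2 q ∨ p.1 q ≤ ε}`, each closed as an intersection of closed half-spaces
in the coordinates. For the equivalence with uniform continuity, density of `ℚ` in `ℝ` lets
one pass between rational and real `ε, δ`, absorbing the difference between `≤` and `<`.
-/

theorem IsPi03.iInter_iUnion {α ι κ : Type*} [TopologicalSpace α] [Countable ι] [Nonempty ι]
    [Countable κ] [Nonempty κ] {C : ι → κ → Set α} (hC : ∀ i j, IsClosed (C i j)) :
    IsPi03 (⋂ i, ⋃ j, C i j) := by
  obtain ⟨f, hf⟩ := exists_surjective_nat ι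
  obtain ⟨g, hg⟩ := exists_surjective_nat κ
  refine ⟨fun i j => C (f i) (g j), fun i j => hC _ _, ?_⟩
  simp only [hf.iInter_comp fun i => ⋃ j, C i j, hg.iUnion_comp]

theorem isClosed_setOf_forall_le_or_le {X ι : Type*} [TopologicalSpace X] {f g : ι → X → ℝ}
    (hf : ∀ i, Continuous (f i)) (hg : ∀ i, Continuous (g i)) (a b : ℝ) :
    IsClosed {x | ∀ i, a ≤ f i x ∨ g i x ≤ b} := by
  simp only [Set.ofPred_forall, Set.ofPred_or]
  exact isClosed_iInter fun i =>
    (isClosed_le continuous_const (hf i)).union (isClosed_le (hg i) continuous_const)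

theorem forall_rat_exists_rat_le_or_le_iff {α : Type*} (f g : α → ℝ) :
    (∀ ε : ℚ, 0 < ε → ∃ δ : ℚ, 0 < δ ∧ ∀ q, (δ : ℝ) ≤ g q ∨ f q ≤ (ε : ℝ)) ↔
      ∀ ε > (0 : ℝ), ∃ δ > (0 : ℝ), ∀ q, g q < δ → f q < ε := by
  constructor
  · intro h ε hε
    obtain ⟨ε', hε'0, hε'ε⟩ := exists_rat_btwn hε
    obtain ⟨δ, hδ, hδf⟩ := h ε' (mod_cast hε'0)
    refine ⟨δ, mod_cast hδ, fun q hq => ?_⟩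
    exact ((hδf q).resolve_left hq.not_ge).trans_lt hε'ε
  · intro h ε hε
    obtain ⟨δ, hδ, hδf⟩ := h ε (mod_cast hε)
    obtain ⟨δ', hδ'0, hδ'δ⟩ := exists_rat_btwn hδ
    refine ⟨δ', mod_cast hδ'0, fun q => ?_⟩
    rcases le_or_gt (δ' : ℝ) (g q) with hq | hq
    · exact .inl hq
    · exact .inr (hδf q (hq.trans hδ'δ)).le

theorem isPi03_setOf_forall_rat_exists_rat :
    IsPi03 {p : (ℕ × ℕ → ℝ) × (ℕ × ℕ → ℝ) |
      ∀ ε : ℚ, 0 < ε → ∃ δ : ℚ, 0 < δ ∧ ∀ q, (δ : ℝ) ≤ p.2 q ∨ p.1 q ≤ (ε : ℝ)} := by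
  have hset : {p : (ℕ × ℕ → ℝ) × (ℕ × ℕ → ℝ) |
      ∀ ε : ℚ, 0 < ε → ∃ δ : ℚ, 0 < δ ∧ ∀ q, (δ : ℝ) ≤ p.2 q ∨ p.1 q ≤ (ε : ℝ)} =
      ⋂ ε : {ε : ℚ // 0 < ε}, ⋃ δ : {δ : ℚ // 0 < δ},
        {p | ∀ q, (δ : ℝ) ≤ p.2 q ∨ p.1 q ≤ (ε : ℝ)} := by
    ext p
    simp [Subtype.forall, Subtype.exists]
  rw [hset]
  have : Nonempty {ε : ℚ // 0 < ε} := ⟨⟨1, one_pos⟩⟩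
  exact IsPi03.iInter_iUnion fun ε δ =>
    isClosed_setOf_forall_le_or_le (fun q => (continuous_apply q).comp continuous_snd)
      (fun q => (continuous_apply q).comp continuous_fst) _ _

/-- The set `A ⊆ (ℝ^{ω×ω})²` defined by the `∀ε ∃δ ∀(x,y)`
clause is `Π⁰₃`, and for metrics `d₁, d₂` on `ω`, `(d₁,d₂) ∈ A` iff the
identity map `(ω,d₂) → (ω,d₁)` is uniformly continuous. -/
theorem stmt16 :
    IsPi03 {p : (ℕ × ℕ → ℝ) × (ℕ × ℕ → ℝ) |
      ∀ ε : ℚ, 0 < ε → ∃ δ : ℚ, 0 < δ ∧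
        ∀ q : ℕ × ℕ, (δ : ℝ) ≤ p.2 q ∨ p.1 q ≤ (ε : ℝ)} ∧
    ∀ d₁ d₂ : ℕ × ℕ → ℝ, IsMetricOn2 d₁ → IsMetricOn2 d₂ →
      ((d₁, d₂) ∈ {p : (ℕ × ℕ → ℝ) × (ℕ × ℕ → ℝ) |
          ∀ ε : ℚ, 0 < ε → ∃ δ : ℚ, 0 < δ ∧
            ∀ q : ℕ × ℕ, (δ : ℝ) ≤ p.2 q ∨ p.1 q ≤ (ε : ℝ)} ↔
        ∀ ε > (0:ℝ), ∃ δ > (0:ℝ), ∀ x y : ℕ,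
          d₂ (x, y) < δ → d₁ (x, y) < ε) := by
  refine ⟨isPi03_setOf_forall_rat_exists_rat, fun d₁ d₂ _ _ => ?_⟩
  simpa only [Set.mem_ofPred_eq, Prod.forall] using forall_rat_exists_rat_le_or_le_iff d₁ d₂
end

section
/- For every nonempty finite family ℱ of moderate refinements of a fixed partition ⟨I_n : n < ω⟩ of ω with |I_n| = 2^{(n+1)²}, the function ρ_ℱ defined by ρ_ℱ(x,y) = 0 if x = y; ρ_ℱ(x,y) = 1 if x ≠ y and every 𝒫 ∈ ℱ puts x, y in the same piece; and ρ_ℱ(x,y) = 1 + max{m,n} if otherwise, where x ∈ I_m and y ∈ I_n; is a proper metric on ω, i.e., a metric for which every bounded set is finite. -/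
/-- `P : ℕ → ℕ` (a labelling, whose fibers are the pieces) encodes a moderate
refinement of the partition `I`: it refines `I`, and splits each `I n` into at
most `2 ^ (n+1)` pieces. -/
def IsModerateRefinement (I : ℕ → Finset ℕ) (P : ℕ → ℕ) : Prop :=
  (∀ x y, P x = P y → ∀ n, x ∈ I n → y ∈ I n) ∧
  ∀ n, ((I n).image P).card ≤ 2 ^ (n + 1)

/-!
Write `x ~ y` when every refinement puts `x` and `y` in the same piece, and let `ℓ x` be the
least `n` with `x ∈ I n`. Since the refinements refine `⟨I_n⟩`, `ℓ` is constant on `~`-classes,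
and then `ρ` is even an ultrametric: it is `0` on the diagonal, `1` inside a `~`-class and
`1 + max (ℓ x) (ℓ y)` otherwise. A set of diameter `R` around `x₀` lies in
`{y | ℓ y ≤ max (ℓ x₀) R}`, a finite union of the finite sets `I n`.
-/

open Classical in
/-- `ρ_ℱ`, with `f x` recording the pieces containing `x` and `ℓ x` an index `n` with
`x ∈ I n`. -/
noncomputable def levelDist {α β : Type*} (f : α → β) (ℓ : α → ℕ) (x y : α) : ℝ :=
  if x = y then 0 else if f x = f y then 1 else 1 + max (ℓ x) (ℓ y)

namespace levelDist

variable {α β : Type*} {f : α → β} {ℓ : α → ℕ}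

@[simp]
lemma self (x : α) : levelDist f ℓ x x = 0 := by
  simp [levelDist]

lemma of_ne_of_eq {x y : α} (hxy : x ≠ y) (hf : f x = f y) : levelDist f ℓ x y = 1 := by
  simp [levelDist, hxy, hf]

lemma of_ne {x y : α} (hf : f x ≠ f y) : levelDist f ℓ x y = 1 + max (ℓ x) (ℓ y) := by
  have hxy : x ≠ y := fun h => hf (congrArg f h)
  simp [levelDist, hxy, hf]

lemma comm (x y : α) : levelDist f ℓ x y = levelDist f ℓ y x := by
  rcases eq_or_ne x y with rfl | hxy
  · rfl
  by_cases hf : f x = f y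
  · rw [of_ne_of_eq hxy hf, of_ne_of_eq hxy.symm hf.symm]
  · rw [of_ne hf, of_ne (Ne.symm hf), max_comm]

lemma one_le {x y : α} (hxy : x ≠ y) : 1 ≤ levelDist f ℓ x y := by
  by_cases hf : f x = f y
  · rw [of_ne_of_eq hxy hf]
  · rw [of_ne hf]
    linarith [(by positivity : (0 : ℝ) ≤ max (ℓ x) (ℓ y))]

lemma nonneg (x y : α) : 0 ≤ levelDist f ℓ x y := by
  rcases eq_or_ne x y with rfl | hxy
  · simp
  · linarith [one_le (f := f) (ℓ := ℓ) hxy]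

lemma eq_zero_iff {x y : α} : levelDist f ℓ x y = 0 ↔ x = y := by
  refine ⟨fun h => ?_, fun h => h ▸ self x⟩
  by_contra hxy
  linarith [one_le (f := f) (ℓ := ℓ) hxy]

lemma level_add_one_le {x y : α} (hf : f x ≠ f y) : (ℓ x : ℝ) + 1 ≤ levelDist f ℓ x y := by
  rw [of_ne hf, add_comm]
  gcongr
  exact_mod_cast le_max_left _ _

variable (hℓ : ∀ x y, f x = f y → ℓ x = ℓ y)
include hℓ

lemma level_add_one_le_max {x z : α} (hxz : f x ≠ f z) (y : α) :
    (ℓ x : ℝ) + 1 ≤ max (levelDist f ℓ x y) (levelDist f ℓ y z) := by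
  by_cases hxy : f x = f y
  · have hyz : f y ≠ f z := hxy ▸ hxz
    rw [hℓ x y hxy]
    exact le_max_of_le_right (level_add_one_le hyz)
  · exact le_max_of_le_left (level_add_one_le hxy)

lemma triangle_max (x y z : α) :
    levelDist f ℓ x z ≤ max (levelDist f ℓ x y) (levelDist f ℓ y z) := by
  rcases eq_or_ne x z with rfl | hxz
  · rw [self]
    exact le_max_of_le_left (nonneg x y)
  by_cases hf : f x = f z
  · rw [of_ne_of_eq hxz hf]
    rcases eq_or_ne x y with rfl | hxy
    · exact le_max_of_le_right (one_le hxz)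
    · exact le_max_of_le_left (one_le hxy)
  · have hz := level_add_one_le_max hℓ (Ne.symm hf) y
    rw [max_comm, comm z y, comm y x] at hz
    rw [of_ne hf, Nat.cast_max, ← max_add_add_left, add_comm (1 : ℝ), add_comm (1 : ℝ)]
    exact max_le (level_add_one_le_max hℓ hf y) hz

lemma level_le_max (x y : α) : (ℓ y : ℝ) ≤ max (ℓ x : ℝ) (levelDist f ℓ x y) := by
  rcases eq_or_ne x y with rfl | hxy
  · exact le_max_left _ _
  by_cases hf : f x = f y
  · exact le_max_of_le_left (by rw [hℓ x y hf])
  · refine le_max_of_le_right ?_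
    rw [comm]
    linarith [level_add_one_le (ℓ := ℓ) (Ne.symm hf)]

lemma finite_of_bounded (hfin : ∀ n, {x | ℓ x ≤ n}.Finite) {B : Set α} {R : ℝ}
    (hB : ∀ x ∈ B, ∀ y ∈ B, levelDist f ℓ x y ≤ R) : B.Finite := by
  rcases B.eq_empty_or_nonempty with rfl | ⟨x₀, hx₀⟩
  · exact Set.finite_empty
  refine (hfin (max (ℓ x₀) ⌊R⌋₊)).subset fun y hy => ?_
  have hyR : (ℓ y : ℝ) ≤ max (ℓ x₀ : ℝ) R :=
    (level_le_max hℓ x₀ y).trans (max_le_max le_rfl (hB x₀ hx₀ y hy))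
  rcases le_max_iff.mp hyR with h | h
  · exact le_max_of_le_left (by exact_mod_cast h)
  · exact le_max_of_le_right (Nat.le_floor h)

end levelDist

lemma isMetricOn_levelDist {α β : Type*} {f : α → β} {ℓ : α → ℕ}
    (hℓ : ∀ x y, f x = f y → ℓ x = ℓ y) : IsMetricOn (levelDist f ℓ) :=
  ⟨fun _ _ => levelDist.eq_zero_iff, levelDist.comm, fun x y z =>
    (levelDist.triangle_max hℓ x y z).trans
      (max_le_add_of_nonneg (levelDist.nonneg x y) (levelDist.nonneg y z))⟩

theorem stmt18_general (I : ℕ → Finset ℕ)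
    (hcover : ∀ x : ℕ, ∃ n, x ∈ I n)
    (k : ℕ) (hk : 0 < k) (F : Fin k → ℕ → ℕ)
    (hF : ∀ j, IsModerateRefinement I (F j))
    (ρ : ℕ → ℕ → ℝ)
    (hρ0 : ∀ x, ρ x x = 0)
    (hρ1 : ∀ x y, x ≠ y → (∀ j, F j x = F j y) → ρ x y = 1)
    (hρ2 : ∀ x y m n, x ≠ y → (∃ j, F j x ≠ F j y) →
      x ∈ I m → y ∈ I n → ρ x y = 1 + max m n) :
    IsMetricOn ρ ∧
    ∀ B : Set ℕ, (∃ R : ℝ, ∀ x ∈ B, ∀ y ∈ B, ρ x y ≤ R) → B.Finite := by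
  classical
  let ℓ : ℕ → ℕ := fun x => Nat.find (hcover x)
  have hmem (x : ℕ) : x ∈ I (ℓ x) := Nat.find_spec (hcover x)
  let f : ℕ → Fin k → ℕ := fun x j => F j x
  have hℓ_le {x y : ℕ} (h : f x = f y) : ℓ y ≤ ℓ x :=
    Nat.find_min' _ ((hF ⟨0, hk⟩).1 x y (congrFun h _) _ (hmem x))
  have hℓ (x y : ℕ) (h : f x = f y) : ℓ x = ℓ y := le_antisymm (hℓ_le h.symm) (hℓ_le h)
  have hfin (n : ℕ) : {x | ℓ x ≤ n}.Finite :=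
    ((Finset.range (n + 1)).biUnion I).finite_toSet.subset fun x hx =>
      Finset.mem_biUnion.mpr ⟨ℓ x, Finset.mem_range.mpr (Nat.lt_succ_of_le hx), hmem x⟩
  have hρ : ρ = levelDist f ℓ := by
    ext x y
    rcases eq_or_ne x y with rfl | hxy
    · rw [hρ0, levelDist.self]
    by_cases hf : f x = f y
    · rw [levelDist.of_ne_of_eq hxy hf, hρ1 x y hxy (congrFun hf)]
    · have hj : ∃ j, F j x ≠ F j y := by simpa [f, funext_iff] using hf
      rw [levelDist.of_ne hf, hρ2 x y _ _ hxy hj (hmem x) (hmem y)]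
  subst hρ
  exact ⟨isMetricOn_levelDist hℓ, fun B ⟨R, hR⟩ => levelDist.finite_of_bounded hℓ hfin hR⟩

/-- For a partition `⟨I_n⟩` of `ω` with `|I_n| = 2^{(n+1)²}`
and a nonempty finite family `ℱ` of moderate refinements, the function `ρ_ℱ`
(described by its defining equations) is a proper metric on `ω`: a metric for
which every bounded set is finite. -/
theorem stmt18 (I : ℕ → Finset ℕ)
    (hcard : ∀ n, (I n).card = 2 ^ ((n + 1) ^ 2))
    (hdisj : ∀ m n, m ≠ n → Disjoint (I m) (I n))
    (hcover : ∀ x : ℕ, ∃ n, x ∈ I n)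
    (k : ℕ) (hk : 0 < k) (F : Fin k → ℕ → ℕ)
    (hF : ∀ j, IsModerateRefinement I (F j))
    (ρ : ℕ → ℕ → ℝ)
    (hρ0 : ∀ x, ρ x x = 0)
    (hρ1 : ∀ x y, x ≠ y → (∀ j, F j x = F j y) → ρ x y = 1)
    (hρ2 : ∀ x y m n, x ≠ y → (∃ j, F j x ≠ F j y) →
      x ∈ I m → y ∈ I n → ρ x y = 1 + max m n) :
    IsMetricOn ρ ∧
    ∀ B : Set ℕ, (∃ R : ℝ, ∀ x ∈ B, ∀ y ∈ B, ρ x y ≤ R) → B.Finite :=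
  stmt18_general I hcover k hk F hF ρ hρ0 hρ1 hρ2
end
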